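/- arXiv:1008.1812 — 3 statements merged into one kernel-verified Lean document; each statement's English description precedes it below -/
import Mathlib

section
/- For integers x, y ≥ 1 and 0 < ρ < 1, the integral (1/(Γ(x)Γ(y))) ∫₀^∞ Γ(x, ρz/(1-ρ)) z^{y-1} e^{-z} dz equals (1/(y-1)!) (1-ρ)^y ∑_{j=0}^{x-1} ((j+y-1)!/j!) ρ^j, where Γ(x,z) = ∫_z^∞ u^{x-1} e^{-u} du is the upper incomplete gamma function. -/
/-!
For integer `x`, repeated integration by parts gives the closed form
`Γ(x, a) = e^{-a} ∑_{k<x} (x-1)!/k! · a^k`. With `c = ρ/(1-ρ)` the integrand is therefore a finite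
sum of terms `c^j z^{j+y-1} e^{-(1+c) z}`, each a complete Gamma integral equal to
`(j+y-1)! / (1+c)^{j+y}`; finally `c/(1+c) = ρ` and `1/(1+c) = 1-ρ`.
-/

open MeasureTheory Real Set

/-- The upper incomplete gamma function `Γ(x, z) = ∫_z^∞ u^{x-1} e^{-u} du`
for a positive integer `x`. -/
noncomputable def upperIncGamma (x : ℕ) (z : ℝ) : ℝ :=
  ∫ u in Set.Ioi z, u ^ (x - 1) * Real.exp (-u)

open Asymptotics
open scoped Nat

lemma integrableOn_Ioi_pow_mul_exp_neg_mul (n : ℕ) {b : ℝ} (hb : 0 < b) (a : ℝ) :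
    IntegrableOn (fun u : ℝ => u ^ n * exp (-(b * u))) (Ioi a) := by
  refine integrable_of_isBigO_exp_neg (half_pos hb) (by fun_prop) ?_
  have hlim := tendsto_rpow_mul_exp_neg_mul_atTop_nhds_zero n (b / 2) (half_pos hb)
  refine (isLittleO_iff_tendsto (fun _ h => absurd h (exp_ne_zero _)) |>.2 ?_).isBigO
  refine hlim.congr fun u => ?_
  rw [rpow_natCast, mul_div_assoc, ← exp_sub]
  ring_nf

lemma integrableOn_Ioi_pow_mul_exp_neg (n : ℕ) (a : ℝ) :
    IntegrableOn (fun u : ℝ => u ^ n * exp (-u)) (Ioi a) := by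
  simpa using integrableOn_Ioi_pow_mul_exp_neg_mul n one_pos a

lemma integral_Ioi_pow_succ_mul_exp_neg (n : ℕ) (a : ℝ) :
    ∫ u in Ioi a, u ^ (n + 1) * exp (-u)
      = a ^ (n + 1) * exp (-a) + (n + 1) * ∫ u in Ioi a, u ^ n * exp (-u) := by
  have hint := integrableOn_Ioi_pow_mul_exp_neg
  have hderiv (u : ℝ) : HasDerivAt (fun u => -(u ^ (n + 1) * exp (-u)))
      (u ^ (n + 1) * exp (-u) - (n + 1) * (u ^ n * exp (-u))) u := by
    refine (((hasDerivAt_pow (n + 1) u).mul (hasDerivAt_neg u).exp).neg).congr_deriv ?_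
    push_cast
    ring
  have hftc := integral_Ioi_of_hasDerivAt_of_tendsto' (fun u _ => hderiv u)
    ((hint (n + 1) a).sub ((hint n a).const_mul _))
    (by simpa using (tendsto_pow_mul_exp_neg_atTop_nhds_zero (n + 1)).neg)
  rw [integral_sub (hint (n + 1) a) ((hint n a).const_mul _), integral_const_mul] at hftc
  linarith

lemma integral_Ioi_pow_mul_exp_neg (n : ℕ) (a : ℝ) :
    ∫ u in Ioi a, u ^ n * exp (-u)
      = exp (-a) * ∑ k ∈ Finset.range (n + 1), (n ! / k ! : ℝ) * a ^ k := by
  induction n with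
  | zero => simpa using integral_exp_neg_Ioi a
  | succ n ih =>
    have hfac (k : ℕ) : ((n + 1) ! / k ! : ℝ) = (n + 1) * (n ! / k !) := by
      push_cast [Nat.factorial_succ]
      ring
    rw [integral_Ioi_pow_succ_mul_exp_neg, ih, Finset.sum_range_succ _ (n + 1),
      div_self (by positivity)]
    simp only [hfac, mul_assoc, ← Finset.mul_sum]
    ring

lemma upperIncGamma_eq_exp_mul_sum {x : ℕ} (hx : 1 ≤ x) (a : ℝ) :
    upperIncGamma x a = exp (-a) * ∑ k ∈ Finset.range x, ((x - 1) ! / k ! : ℝ) * a ^ k := by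
  rw [upperIncGamma, integral_Ioi_pow_mul_exp_neg, Nat.sub_add_cancel hx]

lemma integral_Ioi_zero_pow_mul_exp_neg_mul (m : ℕ) {r : ℝ} (hr : 0 < r) :
    ∫ z in Ioi (0 : ℝ), z ^ m * exp (-(r * z)) = m ! / r ^ (m + 1) := by
  have h := integral_rpow_mul_exp_neg_mul_Ioi (a := m + 1) (by positivity) hr
  rw [Gamma_nat_eq_factorial, ← Nat.cast_succ, rpow_natCast, Nat.cast_succ] at h
  simp only [add_sub_cancel_right, rpow_natCast] at h
  rw [h, Nat.succ_eq_add_one, one_div_pow, one_div_mul_eq_div]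

lemma integral_upperIncGamma_mul_pow_mul_exp_neg {x : ℕ} (hx : 1 ≤ x) (m : ℕ) {c : ℝ}
    (hc : 0 < 1 + c) :
    ∫ z in Ioi (0 : ℝ), upperIncGamma x (c * z) * z ^ m * exp (-z)
      = ∑ j ∈ Finset.range x,
          ((x - 1) ! / j ! : ℝ) * (j + m) ! * (c ^ j / (1 + c) ^ (j + m + 1)) := by
  have hexpand (z : ℝ) : upperIncGamma x (c * z) * z ^ m * exp (-z)
      = ∑ j ∈ Finset.range x,
          ((x - 1) ! / j ! : ℝ) * c ^ j * (z ^ (j + m) * exp (-((1 + c) * z))) := by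
    rw [upperIncGamma_eq_exp_mul_sum hx, Finset.mul_sum, Finset.sum_mul, Finset.sum_mul]
    refine Finset.sum_congr rfl fun j _ => ?_
    rw [pow_add, mul_pow, show -((1 + c) * z) = -(c * z) + -z by ring, exp_add]
    ring
  simp_rw [hexpand]
  rw [integral_finsetSum _ fun j _ =>
    (integrableOn_Ioi_pow_mul_exp_neg_mul (j + m) hc 0).const_mul _]
  refine Finset.sum_congr rfl fun j _ => ?_
  rw [integral_const_mul, integral_Ioi_zero_pow_mul_exp_neg_mul _ hc]
  ring

theorem integral_upperIncGamma_eq_general (x y : ℕ) (hx : 1 ≤ x) (hy : 1 ≤ y)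
    (ρ : ℝ) (hρ1 : ρ < 1) :
    (1 / ((Nat.factorial (x - 1) : ℝ) * (Nat.factorial (y - 1) : ℝ))) *
        ∫ z in Set.Ioi (0 : ℝ),
          upperIncGamma x (ρ / (1 - ρ) * z) * z ^ (y - 1) * Real.exp (-z)
      = (1 / (Nat.factorial (y - 1) : ℝ)) * (1 - ρ) ^ y *
          ∑ j ∈ Finset.range x,
            ((Nat.factorial (j + y - 1) : ℝ) / (Nat.factorial j : ℝ)) * ρ ^ j := by
  have h1ρ : 0 < 1 - ρ := by linarith
  have h1c : 1 + ρ / (1 - ρ) = 1 / (1 - ρ) := by rw [one_add_div h1ρ.ne', sub_add_cancel]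
  have hscale (j : ℕ) :
      (ρ / (1 - ρ)) ^ j / (1 + ρ / (1 - ρ)) ^ (j + (y - 1) + 1) = ρ ^ j * (1 - ρ) ^ y := by
    rw [show j + (y - 1) + 1 = j + y by omega, h1c, div_pow, one_div_pow, div_div_eq_mul_div,
      pow_add]
    field_simp
  rw [integral_upperIncGamma_mul_pow_mul_exp_neg hx (y - 1) (by rw [h1c]; positivity),
    Finset.mul_sum, Finset.mul_sum]
  refine Finset.sum_congr rfl fun j _ => ?_
  rw [show j + y - 1 = j + (y - 1) by omega, hscale]
  field_simp

theorem integral_upperIncGamma_eq (x y : ℕ) (hx : 1 ≤ x) (hy : 1 ≤ y)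
    (ρ : ℝ) (hρ0 : 0 < ρ) (hρ1 : ρ < 1) :
    (1 / ((Nat.factorial (x - 1) : ℝ) * (Nat.factorial (y - 1) : ℝ))) *
        ∫ z in Set.Ioi (0 : ℝ),
          upperIncGamma x (ρ / (1 - ρ) * z) * z ^ (y - 1) * Real.exp (-z)
      = (1 / (Nat.factorial (y - 1) : ℝ)) * (1 - ρ) ^ y *
          ∑ j ∈ Finset.range x,
            ((Nat.factorial (j + y - 1) : ℝ) / (Nat.factorial j : ℝ)) * ρ ^ j :=
  integral_upperIncGamma_eq_general x y hx hy ρ hρ1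
end

section
/- Let X ~ Gamma(x, ρ) and Y ~ Gamma(y, 1-ρ) be independent random variables with integer shape parameters x, y ≥ 1 and rates ρ and 1-ρ respectively, where 0 < ρ < 1. Then P(X ≥ Y) = (1/(y-1)!) (1-ρ)^y ∑_{j=0}^{x-1} ((j+y-1)!/j!) ρ^j. -/
/-! For integer shape `n + 1`, the survival function of `Gamma(n + 1, r)` at `t ≥ 0` is the Poisson
tail `e^{-rt} ∑_{j ≤ n} (rt)^j / j!`, since the derivative of this sum telescopes to minus the
density. By independence, `P(Y ≤ X)` integrates this tail against the law of `Y`; against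
`Gamma(a, s)` the density times `t^j e^{-rt}` is a constant multiple of the density of
`Gamma(a + j, s + r)`, so each term contributes that constant. -/

open MeasureTheory ProbabilityTheory Real
open Set Filter Topology Finset
open scoped ENNReal Nat

lemma hasDerivAt_exp_neg_mul_mul_sum_pow_div_factorial (r : ℝ) (n : ℕ) (u : ℝ) :
    HasDerivAt (fun u => exp (-(r * u)) * ∑ j ∈ range (n + 1), (r * u) ^ j / j !)
      (-(r ^ (n + 1) * u ^ n * exp (-(r * u)) / n !)) u := by
  have hlin : HasDerivAt (fun u => r * u) r u := by simpa using (hasDerivAt_id u).const_mul r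
  induction n with
  | zero => simpa [mul_comm] using hlin.neg.exp
  | succ n ih =>
    have hterm := hlin.neg.exp.mul ((hlin.pow (n + 1)).div_const ((n + 1)! : ℝ))
    have hsplit : (fun u => exp (-(r * u)) * ∑ j ∈ range (n + 2), (r * u) ^ j / j !) =
        fun u => exp (-(r * u)) * ∑ j ∈ range (n + 1), (r * u) ^ j / j !
          + exp (-(r * u)) * ((r * u) ^ (n + 1) / (n + 1)!) := by
      ext v; rw [sum_range_succ]; ring
    rw [hsplit]
    refine (ih.add hterm).congr_deriv ?_
    simp only [Pi.neg_apply, Pi.pow_apply, Nat.add_sub_cancel, Nat.factorial_succ]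
    push_cast; field_simp; ring

lemma tendsto_exp_neg_mul_mul_sum_pow_div_factorial {r : ℝ} (hr : 0 < r) (n : ℕ) :
    Tendsto (fun u => exp (-(r * u)) * ∑ j ∈ range n, (r * u) ^ j / j !) atTop (𝓝 0) := by
  simp_rw [mul_sum]
  rw [← sum_const_zero (s := range n)]
  refine tendsto_finsetSum _ fun j _ => ?_
  have h := ((tendsto_pow_mul_exp_neg_atTop_nhds_zero j).comp
    (tendsto_id.const_mul_atTop hr)).div_const (j ! : ℝ)
  rw [zero_div] at h
  refine h.congr fun u => ?_
  simp only [Function.comp_apply, id, mul_div_assoc']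
  ring

lemma gammaPDFReal_natCast_succ (n : ℕ) (r : ℝ) {u : ℝ} (hu : 0 ≤ u) :
    gammaPDFReal ((n + 1 : ℕ) : ℝ) r u = r ^ (n + 1) * u ^ n * exp (-(r * u)) / n ! := by
  rw [gammaPDFReal, if_pos hu, Nat.cast_succ, Gamma_nat_eq_factorial, add_sub_cancel_right,
    ← Nat.cast_succ, rpow_natCast, rpow_natCast, pow_succ]
  ring

lemma measurable_gammaPDF (a r : ℝ) : Measurable (gammaPDF a r) :=
  (measurable_gammaPDFReal a r).ennreal_ofReal

lemma ae_nonneg_gammaMeasure (a r : ℝ) : ∀ᵐ t ∂gammaMeasure a r, 0 ≤ t := by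
  rw [gammaMeasure, ae_withDensity_iff (measurable_gammaPDF a r)]
  exact ae_of_all _ fun t ht => not_lt.mp fun h => ht (gammaPDF_of_neg h)

lemma gammaMeasure_natCast_succ_Ici (n : ℕ) {r t : ℝ} (hr : 0 < r) (ht : 0 ≤ t) :
    gammaMeasure ((n + 1 : ℕ) : ℝ) r (Ici t)
      = ENNReal.ofReal (exp (-(r * t)) * ∑ j ∈ range (n + 1), (r * t) ^ j / j !) := by
  have hderiv : ∀ u ∈ Ici t, HasDerivAt
      (fun u => exp (-(r * u)) * ∑ j ∈ range (n + 1), (r * u) ^ j / j !)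
      (-gammaPDFReal ((n + 1 : ℕ) : ℝ) r u) u := fun u hu => by
    rw [gammaPDFReal_natCast_succ n r (ht.trans hu)]
    exact hasDerivAt_exp_neg_mul_mul_sum_pow_div_factorial r n u
  have hnonpos : ∀ u ∈ Ioi t, -gammaPDFReal ((n + 1 : ℕ) : ℝ) r u ≤ 0 := fun u _ =>
    neg_nonpos.mpr (gammaPDFReal_nonneg (by positivity) hr u)
  have hlim := tendsto_exp_neg_mul_mul_sum_pow_div_factorial hr (n + 1)
  have hint : IntegrableOn (gammaPDFReal ((n + 1 : ℕ) : ℝ) r) (Ioi t) := by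
    simpa using (integrableOn_Ioi_deriv_of_nonpos' hderiv hnonpos hlim).neg
  have hftc := integral_Ioi_of_hasDerivAt_of_nonpos' hderiv hnonpos hlim
  rw [integral_neg, zero_sub, neg_inj] at hftc
  rw [gammaMeasure, withDensity_apply _ measurableSet_Ici, ← setLIntegral_congr Ioi_ae_eq_Ici,
    ← hftc]
  exact (ofReal_integral_eq_lintegral_ofReal hint
    (ae_of_all _ (gammaPDFReal_nonneg (by positivity) hr))).symm

lemma gammaPDF_mul_pow_mul_exp_neg_mul (j : ℕ) {a r s t : ℝ} (ha : 0 < a) (hr : 0 ≤ r)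
    (hrs : 0 < r + s) (ht : t ≠ 0) :
    gammaPDF a r t * ENNReal.ofReal (t ^ j * exp (-(s * t)))
      = ENNReal.ofReal (r ^ a * Gamma (a + j) / (Gamma a * (r + s) ^ (a + j)))
        * gammaPDF (a + j) (r + s) t := by
  rcases ht.lt_or_gt with hneg | hpos
  · simp [gammaPDF_of_neg hneg]
  have hΓ := Gamma_pos_of_pos ha
  have hΓj := Gamma_pos_of_pos (show 0 < a + j by positivity)
  have hpow := rpow_pos_of_pos hrs (a + j)
  rw [gammaPDF_of_nonneg hpos.le, gammaPDF_of_nonneg hpos.le, ← ENNReal.ofReal_mul (by positivity),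
    ← ENNReal.ofReal_mul (by positivity)]
  congr 1
  rw [show a + j - 1 = (a - 1) + j by ring, rpow_add_natCast hpos.ne',
    show -((r + s) * t) = -(r * t) + -(s * t) by ring, exp_add]
  field_simp

lemma lintegral_pow_mul_exp_neg_mul_gammaMeasure (j : ℕ) {a r s : ℝ} (ha : 0 < a) (hr : 0 ≤ r)
    (hrs : 0 < r + s) :
    ∫⁻ t, ENNReal.ofReal (t ^ j * exp (-(s * t))) ∂gammaMeasure a r
      = ENNReal.ofReal (r ^ a * Gamma (a + j) / (Gamma a * (r + s) ^ (a + j))) := by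
  rw [gammaMeasure, lintegral_withDensity_eq_lintegral_mul _ (measurable_gammaPDF a r)
    (by fun_prop)]
  refine (lintegral_congr_ae ((volume.ae_ne 0).mono fun t ht =>
      gammaPDF_mul_pow_mul_exp_neg_mul j ha hr hrs ht)).trans ?_
  rw [lintegral_const_mul _ (measurable_gammaPDF _ _),
    lintegral_gammaPDF_eq_one (by positivity) hrs, mul_one]

lemma lintegral_gammaMeasure_natCast_succ_Ici (n : ℕ) {a r s : ℝ} (ha : 0 < a) (hr : 0 < r)
    (hs : 0 ≤ s) :
    ∫⁻ t, gammaMeasure ((n + 1 : ℕ) : ℝ) r (Ici t) ∂gammaMeasure a s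
      = ENNReal.ofReal (∑ j ∈ range (n + 1),
          r ^ j / j ! * (s ^ a * Gamma (a + j) / (Gamma a * (s + r) ^ (a + j)))) := by
  have hpos : ∀ j : ℕ, 0 ≤ r ^ j / j ! := fun j => by positivity
  calc ∫⁻ t, gammaMeasure ((n + 1 : ℕ) : ℝ) r (Ici t) ∂gammaMeasure a s
      = ∫⁻ t, ∑ j ∈ range (n + 1),
          ENNReal.ofReal (r ^ j / j !) * ENNReal.ofReal (t ^ j * exp (-(r * t)))
          ∂gammaMeasure a s := by
        refine lintegral_congr_ae ((ae_nonneg_gammaMeasure a s).mono fun t ht => ?_)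
        dsimp only
        rw [gammaMeasure_natCast_succ_Ici n hr ht, mul_sum,
          ENNReal.ofReal_sum_of_nonneg fun j _ => by positivity]
        refine sum_congr rfl fun j _ => ?_
        rw [← ENNReal.ofReal_mul (hpos j)]
        ring_nf
    _ = ∑ j ∈ range (n + 1), ENNReal.ofReal (r ^ j / j !)
          * ENNReal.ofReal (s ^ a * Gamma (a + j) / (Gamma a * (s + r) ^ (a + j))) := by
        rw [lintegral_finsetSum _ fun j _ => by fun_prop]
        refine sum_congr rfl fun j _ => ?_
        rw [lintegral_const_mul _ (by fun_prop),
          lintegral_pow_mul_exp_neg_mul_gammaMeasure j ha hs (by linarith)]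
    _ = _ := by
        rw [ENNReal.ofReal_sum_of_nonneg fun j _ => mul_nonneg (hpos j) (by
          have := Gamma_pos_of_pos ha
          have := Gamma_pos_of_pos (show 0 < a + j by positivity)
          positivity)]
        exact sum_congr rfl fun j _ => (ENNReal.ofReal_mul (hpos j)).symm

lemma measure_le_eq_lintegral_map_Ici {Ω : Type*} [MeasurableSpace Ω] {P : Measure Ω}
    [IsFiniteMeasure P] {X Y : Ω → ℝ} (hX : AEMeasurable X P) (hY : AEMeasurable Y P)
    (hXY : IndepFun X Y P) :
    P {ω | Y ω ≤ X ω} = ∫⁻ t, P.map X (Ici t) ∂P.map Y := by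
  have hs : MeasurableSet {p : ℝ × ℝ | p.2 ≤ p.1} := measurableSet_le measurable_snd measurable_fst
  change P ((fun ω => (X ω, Y ω)) ⁻¹' {p | p.2 ≤ p.1}) = _
  rw [← Measure.map_apply_of_aemeasurable (hX.prodMk hY) hs,
    (indepFun_iff_map_prod_eq_prod_map_map hX hY).mp hXY, Measure.prod_apply_symm hs]
  rfl

theorem gamma_vs_gamma_prob {Ω : Type*} [MeasurableSpace Ω]
    (P : Measure Ω) [IsProbabilityMeasure P]
    (x y : ℕ) (hx : 1 ≤ x) (hy : 1 ≤ y) (ρ : ℝ) (hρ0 : 0 < ρ) (hρ1 : ρ < 1)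
    (X Y : Ω → ℝ)
    (hX : Measure.map X P = gammaMeasure (x : ℝ) ρ)
    (hY : Measure.map Y P = gammaMeasure (y : ℝ) (1 - ρ))
    (hXY : IndepFun X Y P) :
    P {ω | Y ω ≤ X ω}
      = ENNReal.ofReal
          ((1 / (Nat.factorial (y - 1) : ℝ)) * (1 - ρ) ^ y *
            ∑ j ∈ Finset.range x,
              ((Nat.factorial (j + y - 1) : ℝ) / (Nat.factorial j : ℝ)) * ρ ^ j) := by
  obtain ⟨n, rfl⟩ := Nat.exists_eq_add_of_le' hx
  obtain ⟨m, rfl⟩ := Nat.exists_eq_add_of_le' hy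
  have : IsProbabilityMeasure (gammaMeasure ((n + 1 : ℕ) : ℝ) ρ) :=
    isProbabilityMeasure_gammaMeasure (by positivity) hρ0
  have : IsProbabilityMeasure (gammaMeasure ((m + 1 : ℕ) : ℝ) (1 - ρ)) :=
    isProbabilityMeasure_gammaMeasure (by positivity) (by linarith)
  have hXm : AEMeasurable X P := aemeasurable_of_map_neZero (by rw [hX]; infer_instance)
  have hYm : AEMeasurable Y P := aemeasurable_of_map_neZero (by rw [hY]; infer_instance)
  have hΓ : ∀ j : ℕ, Gamma (((m + 1 : ℕ) : ℝ) + j) = (m + j)! := fun j => by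
    rw [← Gamma_nat_eq_factorial]; push_cast; ring_nf
  have hΓ₀ : Gamma ((m + 1 : ℕ) : ℝ) = m ! := by rw [Nat.cast_succ, Gamma_nat_eq_factorial]
  rw [measure_le_eq_lintegral_map_Ici hXm hYm hXY, hX, hY,
    lintegral_gammaMeasure_natCast_succ_Ici n (by positivity) hρ0 (by linarith)]
  congr 1
  simp only [sub_add_cancel, one_rpow, mul_one, rpow_natCast, hΓ, mul_sum]
  refine sum_congr rfl fun j _ => ?_
  rw [show j + (m + 1) - 1 = m + j by omega, Nat.add_sub_cancel, hΓ₀]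
  field_simp
end

section
/- Let k⁺ ≥ 1 be an integer, ρ ∈ (0,1) with 1 − ρ > 1/(1 + k⁺). Then the equation λ(1 − (1−ρ)λ)^{k⁺} = ρ^{k⁺} has a solution λ ∈ (0,1), i.e., the function g(λ) = λ(1 − (1−ρ)λ)^{k⁺} − ρ^{k⁺} has a zero in the open interval (0,1). -/
/-!
The function `f x = x (1 - s x)^k`, `s = 1 - ρ`, vanishes at `0`, equals `ρ^k` at `1`, and strictly
decreases from its maximiser `a = 1 / ((k + 1) s)` to its zero `1 / s ≥ 1`. The hypothesis says
exactly `a < 1`, so `f a > f 1 = ρ^k`, and the intermediate value theorem on `[0, a]` gives the root.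
-/

open Set

section MulOneSubMulPow

variable {s : ℝ} {k : ℕ}

theorem hasDerivAt_mul_one_sub_mul_pow (hk : 1 ≤ k) (x : ℝ) :
    HasDerivAt (fun x => x * (1 - s * x) ^ k)
      ((1 - s * x) ^ (k - 1) * (1 - (k + 1) * s * x)) x := by
  refine ((hasDerivAt_id' x).mul
    ((((hasDerivAt_id' x).const_mul s).const_sub 1).pow k)).congr_deriv ?_
  obtain ⟨n, rfl⟩ := Nat.exists_eq_add_of_le' hk
  simp only [Pi.pow_apply, Nat.add_sub_cancel]
  push_cast
  ring

theorem strictAntiOn_mul_one_sub_mul_pow (hs : 0 < s) (hk : 1 ≤ k) :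
    StrictAntiOn (fun x => x * (1 - s * x) ^ k) (Icc (1 / ((k + 1) * s)) (1 / s)) := by
  refine strictAntiOn_of_deriv_neg (convex_Icc _ _) (by fun_prop) fun x hx => ?_
  rw [interior_Icc] at hx
  rw [(hasDerivAt_mul_one_sub_mul_pow hk x).deriv]
  have hpos : 0 < 1 - s * x := by
    have := hx.2
    rw [lt_div_iff₀ hs] at this
    linarith
  have hneg : 1 - (k + 1) * s * x < 0 := by
    have := hx.1
    rw [div_lt_iff₀ (by positivity)] at this
    linarith
  exact mul_neg_of_pos_of_neg (pow_pos hpos _) hneg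

end MulOneSubMulPow

theorem exists_root_queue_eq_general (k : ℕ) (hk : 1 ≤ k) (ρ : ℝ) (hρ0 : 0 < ρ)
    (hrare : 1 / (1 + (k : ℝ)) < 1 - ρ) :
    ∃ lam ∈ Set.Ioo (0 : ℝ) 1, lam * (1 - (1 - ρ) * lam) ^ k - ρ ^ k = 0 := by
  set f : ℝ → ℝ := fun x => x * (1 - (1 - ρ) * x) ^ k
  set a : ℝ := 1 / ((k + 1) * (1 - ρ))
  have hs : 0 < 1 - ρ := lt_trans (by positivity) hrare
  have ha0 : 0 < a := by positivity
  have ha1 : a < 1 := by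
    rw [div_lt_one (by positivity)]
    rw [div_lt_iff₀ (by positivity)] at hrare
    linarith
  have h1s : 1 ≤ 1 / (1 - ρ) := by rw [le_div_iff₀ hs]; linarith
  have hfa : ρ ^ k < f a := by
    have hlt : f 1 < f a :=
      strictAntiOn_mul_one_sub_mul_pow hs hk ⟨le_rfl, ha1.le.trans h1s⟩ ⟨ha1.le, h1s⟩ ha1
    rwa [show f 1 = ρ ^ k by simp [f]] at hlt
  obtain ⟨lam, hlam, hval⟩ := intermediate_value_Ioo ha0.le (by fun_prop : Continuous f).continuousOn
    (show ρ ^ k ∈ Ioo (f 0) (f a) by simpa [f] using ⟨pow_pos hρ0 k, hfa⟩)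
  exact ⟨lam, ⟨hlam.1, hlam.2.trans ha1⟩, sub_eq_zero.mpr hval⟩

theorem exists_root_queue_eq (k : ℕ) (hk : 1 ≤ k) (ρ : ℝ) (hρ0 : 0 < ρ) (hρ1 : ρ < 1)
    (hrare : 1 / (1 + (k : ℝ)) < 1 - ρ) :
    ∃ lam ∈ Set.Ioo (0 : ℝ) 1, lam * (1 - (1 - ρ) * lam) ^ k - ρ ^ k = 0 :=
  exists_root_queue_eq_general k hk ρ hρ0 hrare
end
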